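/- arXiv:math/0610550 — 2 statements merged into one kernel-verified Lean document; each statement's English description precedes it below -/
import Mathlib

section
/- Let P be a real symmetric n×n stochastic matrix whose largest eigenvalue 1 has eigenvector (1,…,1)/√n, and let μ denote the maximum absolute value of the other eigenvalues. Then μ/n ≤ max_{i,j} |P_{ij} − 1/n| ≤ μ. -/
/-!
Let `u` be the uniform unit vector and `Q = P - u uᵀ`, whose entries are `P i j - 1/n`. As `u` is
an eigenvector of both `P` and `Pᵀ` for the eigenvalue `1`, deflation sends an eigenvector `v` of
`P` to the eigenvector `v - ⟪u, v⟫ u` of `Q` with the same eigenvalue; if that vector vanishes,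
`v` is parallel to `u` and the Perron eigenvector, orthogonal to `u`, takes its place. So every
non-Perron eigenvalue is an eigenvalue of `Q`, and Gershgorin bounds it by `n · max |Q i j|`.

Conversely, if `1` is a simple eigenvalue, `u` is `±` the Perron eigenvector and
`Q = ∑_{k ≠ i₀} λ_k b_k b_kᵀ`, whose entries are at most `μ ∑_k |b_k i| |b_k j| ≤ μ` because the
rows of an orthogonal matrix are unit vectors. Otherwise `μ ≥ 1`, and `P i j` and `1/n` both lie
in `[0, 1]`.
-/

open Matrix Finset

namespace OrthonormalBasis

variable {ι : Type*} [Fintype ι] (b : OrthonormalBasis ι ℝ (EuclideanSpace ℝ ι))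

theorem dotProduct_eq_ite [DecidableEq ι] (k l : ι) :
    ⇑(b k) ⬝ᵥ ⇑(b l) = if k = l then 1 else 0 := by
  rw [← orthonormal_iff_ite.mp b.orthonormal k l, EuclideanSpace.inner_eq_star_dotProduct,
    star_trivial, dotProduct_comm]

theorem sum_dotProduct_smul (x : ι → ℝ) : ∑ k, (⇑(b k) ⬝ᵥ x) • ⇑(b k) = x := by
  have := congrArg WithLp.ofLp (b.sum_repr' (WithLp.toLp 2 x))
  simpa only [WithLp.ofLp_sum, WithLp.ofLp_smul, EuclideanSpace.inner_eq_star_dotProduct,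
    star_trivial, dotProduct_comm] using this

theorem sum_sq_apply [DecidableEq ι] (i : ι) : ∑ k, b k i ^ 2 = 1 := by
  simpa [dotProduct_single_one, sq] using congrFun (b.sum_dotProduct_smul (Pi.single i 1)) i

theorem abs_sum_smul_vecMulVec_apply_le (s : Finset ι) {ν : ι → ℝ} {m : ℝ}
    (hν : ∀ k ∈ s, |ν k| ≤ m) (hm : 0 ≤ m) (i j : ι) :
    |(∑ k ∈ s, ν k • vecMulVec ⇑(b k) ⇑(b k)) i j| ≤ m := by
  have hprod (k : ι) : |b k i * b k j| ≤ (b k i ^ 2 + b k j ^ 2) / 2 :=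
    abs_le.mpr ⟨by nlinarith [sq_nonneg (b k i + b k j)], by nlinarith [sq_nonneg (b k i - b k j)]⟩
  calc |(∑ k ∈ s, ν k • vecMulVec ⇑(b k) ⇑(b k)) i j|
      = |∑ k ∈ s, ν k * (b k i * b k j)| := by simp [Matrix.sum_apply, vecMulVec_apply]
    _ ≤ ∑ k ∈ s, m * ((b k i ^ 2 + b k j ^ 2) / 2) := by
        refine (abs_sum_le_sum_abs _ _).trans (sum_le_sum fun k hk => ?_)
        rw [abs_mul]
        exact mul_le_mul (hν k hk) (hprod k) (abs_nonneg _) hm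
    _ ≤ ∑ k, m * ((b k i ^ 2 + b k j ^ 2) / 2) :=
        sum_le_sum_of_subset_of_nonneg (subset_univ s) fun k _ _ => by positivity
    _ = m := by
        classical
        rw [← mul_sum, ← sum_div, sum_add_distrib, b.sum_sq_apply, b.sum_sq_apply]
        ring

end OrthonormalBasis

namespace Matrix

variable {ι R : Type*} [Fintype ι]

section CommRing

variable [CommRing R] {A : Matrix ι ι R} {u v : ι → R} {c : R}

theorem mul_dotProduct_eq_of_vecMul_eq (huA : u ᵥ* A = u) (hv : A *ᵥ v = c • v) :
    c * (u ⬝ᵥ v) = u ⬝ᵥ v := by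
  rw [← smul_eq_mul, ← dotProduct_smul, ← hv, dotProduct_mulVec, huA]

theorem sub_vecMulVec_mulVec_sub_smul (hAu : A *ᵥ u = u) (huA : u ᵥ* A = u)
    (hu : u ⬝ᵥ u = 1) (hv : A *ᵥ v = c • v) :
    (A - vecMulVec u u) *ᵥ (v - (u ⬝ᵥ v) • u) = c • (v - (u ⬝ᵥ v) • u) := by
  have hc := mul_dotProduct_eq_of_vecMul_eq huA hv
  have hw : u ⬝ᵥ (v - (u ⬝ᵥ v) • u) = 0 := by
    rw [dotProduct_sub, dotProduct_smul, hu, smul_eq_mul, mul_one, sub_self]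
  rw [sub_mulVec, vecMulVec_mulVec, hw, MulOpposite.op_zero, zero_smul, sub_zero, mulVec_sub,
    mulVec_smul, hAu, hv, smul_sub, smul_smul, hc]

theorem hasEigenvalue_toLin'_of_mulVec_eq_smul [DecidableEq ι] {M : Matrix ι ι R} {w : ι → R}
    (hw : w ≠ 0) (h : M *ᵥ w = c • w) : Module.End.HasEigenvalue (toLin' M) c :=
  Module.End.hasEigenvalue_of_hasEigenvector
    ⟨Module.End.mem_eigenspace_iff.mpr (by rwa [toLin'_apply]), hw⟩

end CommRing

theorem abs_le_card_mul_of_hasEigenvalue [DecidableEq ι] {M : Matrix ι ι ℝ} {ν b : ℝ}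
    (hν : Module.End.HasEigenvalue (toLin' M) ν) (hb : ∀ i j, |M i j| ≤ b) :
    |ν| ≤ Fintype.card ι * b := by
  obtain ⟨k, hk⟩ := eigenvalue_mem_ball hν
  simp only [Metric.mem_closedBall, Real.dist_eq, Real.norm_eq_abs] at hk
  calc |ν| ≤ |M k k| + ∑ j ∈ univ.erase k, |M k j| := by
        linarith [abs_sub_abs_le_abs_sub ν (M k k)]
    _ = ∑ j, |M k j| := add_sum_erase _ (fun j => |M k j|) (mem_univ k)
    _ ≤ ∑ _j : ι, b := sum_le_sum fun j _ => hb k j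
    _ = Fintype.card ι * b := by simp

namespace IsHermitian

theorem vecMul_eq_mulVec {A : Matrix ι ι ℝ} (hA : A.IsHermitian) (u : ι → ℝ) :
    u ᵥ* A = A *ᵥ u := by
  rw [← mulVec_transpose, ← conjTranspose_eq_transpose_of_trivial, hA.eq]

variable [DecidableEq ι] {A : Matrix ι ι ℝ} (hA : A.IsHermitian) {u : ι → ℝ}
include hA

theorem sum_eigenvalues_smul_vecMulVec :
    ∑ k, hA.eigenvalues k • vecMulVec ⇑(hA.eigenvectorBasis k) ⇑(hA.eigenvectorBasis k) = A := by
  refine ext_iff_mulVec.mpr fun x => ?_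
  conv_rhs => rw [← hA.eigenvectorBasis.sum_dotProduct_smul x]
  simp only [sum_mulVec, smul_mulVec, vecMulVec_mulVec, op_smul_eq_smul, mulVec_sum,
    mulVec_smul, mulVec_eigenvectorBasis, smul_smul, mul_comm]

theorem hasEigenvalue_sub_vecMulVec (hAu : A *ᵥ u = u) (hu : u ⬝ᵥ u = 1) {i₀ k : ι}
    (hi₀ : hA.eigenvalues i₀ = 1) (hk : k ≠ i₀) :
    Module.End.HasEigenvalue (toLin' (A - vecMulVec u u)) (hA.eigenvalues k) := by
  have huA := (hA.vecMul_eq_mulVec u).trans hAu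
  have heig := hA.mulVec_eigenvectorBasis
  have hdefl (l : ι) := sub_vecMulVec_mulVec_sub_smul hAu huA hu (heig l)
  set b := hA.eigenvectorBasis
  by_cases hw : ⇑(b k) - (u ⬝ᵥ ⇑(b k)) • u = 0
  · set c := u ⬝ᵥ ⇑(b k)
    rw [sub_eq_zero] at hw
    have hbk : ⇑(b k) ≠ 0 := fun h => by simpa [h] using b.dotProduct_eq_ite k k
    have hc : c ≠ 0 := fun h => hbk (by rw [hw, h, zero_smul])
    have hk1 : hA.eigenvalues k = 1 := by
      refine smul_left_injective ℝ hbk (?_ : hA.eigenvalues k • ⇑(b k) = (1 : ℝ) • ⇑(b k))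
      rw [← heig, one_smul, hw, mulVec_smul, hAu]
    have hi₀u : u ⬝ᵥ ⇑(b i₀) = 0 := by
      have h := b.dotProduct_eq_ite k i₀
      rw [if_neg hk, hw, smul_dotProduct, smul_eq_mul] at h
      exact (mul_eq_zero.mp h).resolve_left hc
    have hbi₀ : ⇑(b i₀) ≠ 0 := fun h => by simpa [h] using b.dotProduct_eq_ite i₀ i₀
    refine hasEigenvalue_toLin'_of_mulVec_eq_smul hbi₀ ?_
    simpa [hi₀u, hi₀, hk1] using hdefl i₀
  · exact hasEigenvalue_toLin'_of_mulVec_eq_smul hw (hdefl k)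

theorem abs_sub_vecMulVec_apply_le (hAu : A *ᵥ u = u) (hu : u ⬝ᵥ u = 1) {i₀ : ι}
    (hi₀ : hA.eigenvalues i₀ = 1) (hne : ∀ k ≠ i₀, hA.eigenvalues k ≠ 1) {m : ℝ}
    (hm : ∀ k ≠ i₀, |hA.eigenvalues k| ≤ m) (hm0 : 0 ≤ m) (i j : ι) :
    |(A - vecMulVec u u) i j| ≤ m := by
  have huA := (hA.vecMul_eq_mulVec u).trans hAu
  have heig := hA.mulVec_eigenvectorBasis
  have hspec := hA.sum_eigenvalues_smul_vecMulVec
  set b := hA.eigenvectorBasis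
  have hperp (k : ι) (hk : k ≠ i₀) : u ⬝ᵥ ⇑(b k) = 0 := by
    have h := mul_dotProduct_eq_of_vecMul_eq huA (heig k)
    rw [← sub_eq_zero, ← sub_one_mul, mul_eq_zero, sub_eq_zero] at h
    exact h.resolve_left (hne k hk)
  set c := u ⬝ᵥ ⇑(b i₀)
  have hu_eq : u = c • ⇑(b i₀) := by
    conv_lhs => rw [← b.sum_dotProduct_smul u]
    refine (sum_eq_single i₀ (fun k _ hk => ?_) (by simp)).trans ?_
    · rw [dotProduct_comm, hperp k hk, zero_smul]
    · rw [dotProduct_comm]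
  have hc : c * c = 1 := by
    rw [← hu, hu_eq, smul_dotProduct, dotProduct_smul, b.dotProduct_eq_ite, if_pos rfl,
      smul_eq_mul, smul_eq_mul, mul_one]
  have hQ : A - vecMulVec u u =
      ∑ k ∈ univ.erase i₀, hA.eigenvalues k • vecMulVec ⇑(b k) ⇑(b k) := by
    rw [hu_eq, smul_vecMulVec, vecMulVec_smul, smul_smul, hc, one_smul]
    conv_lhs => rw [← hspec, ← add_sum_erase _ _ (mem_univ i₀), hi₀, one_smul]
    abel
  rw [hQ]
  exact b.abs_sum_smul_vecMulVec_apply_le _ (fun k hk => hm k (ne_of_mem_erase hk)) hm0 i j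

end IsHermitian

end Matrix

/-- Let `P` be a real symmetric `n×n` stochastic matrix whose largest eigenvalue `1`
    has eigenvector `(1,…,1)/√n`, and let `μ` be the maximum absolute value of the
    remaining eigenvalues.  Then `μ/n ≤ max_{i,j} |P_{ij} − 1/n| ≤ μ`. -/
theorem symmetric_stochastic_mixing_bound
    (n : ℕ) (hn : 2 ≤ n) (P : Matrix (Fin n) (Fin n) ℝ)
    (hP : P.IsHermitian)
    (hnonneg : ∀ i j, 0 ≤ P i j)
    (hrow : ∀ i, ∑ j, P i j = 1)
    (i₀ : Fin n) (hi₀ : hP.eigenvalues i₀ = 1)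
    (hvec : P.mulVec (fun _ => Real.sqrt n⁻¹) = fun _ => Real.sqrt n⁻¹)
    (μ : ℝ)
    (hμ : μ = (Finset.univ.erase i₀).sup'
      (by
        haveI : Nontrivial (Fin n) := Fin.nontrivial_iff_two_le.mpr hn
        exact (Finset.erase_nonempty (Finset.mem_univ i₀)).2 Finset.univ_nontrivial)
      (fun i => |hP.eigenvalues i|)) :
    μ / n ≤ (Finset.univ ×ˢ Finset.univ).sup' ⟨(i₀, i₀), by simp⟩
        (fun p : Fin n × Fin n => |P p.1 p.2 - (n : ℝ)⁻¹|) ∧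
    (Finset.univ ×ˢ Finset.univ).sup' ⟨(i₀, i₀), by simp⟩
        (fun p : Fin n × Fin n => |P p.1 p.2 - (n : ℝ)⁻¹|) ≤ μ := by
  have hn0 : (0 : ℝ) < n := by positivity
  set u : Fin n → ℝ := fun _ => √(n : ℝ)⁻¹
  have hsq : √(n : ℝ)⁻¹ * √(n : ℝ)⁻¹ = (n : ℝ)⁻¹ := Real.mul_self_sqrt (by positivity)
  have hu : u ⬝ᵥ u = 1 := by
    simp only [u, dotProduct, hsq, sum_const, card_univ, Fintype.card_fin, nsmul_eq_mul]
    exact mul_inv_cancel₀ hn0.ne'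
  have hQ (i j : Fin n) : (P - vecMulVec u u) i j = P i j - (n : ℝ)⁻¹ := by
    rw [Matrix.sub_apply, vecMulVec_apply, hsq]
  have hS (i j : Fin n) : |(P - vecMulVec u u) i j| ≤ (univ ×ˢ univ).sup' ⟨(i₀, i₀), by simp⟩
      (fun p : Fin n × Fin n => |P p.1 p.2 - (n : ℝ)⁻¹|) :=
    hQ i j ▸ le_sup' (fun p : Fin n × Fin n => |P p.1 p.2 - (n : ℝ)⁻¹|)
      (mk_mem_product (mem_univ i) (mem_univ j))
  have hμ_ge (k : Fin n) (hk : k ≠ i₀) : |hP.eigenvalues k| ≤ μ :=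
    hμ ▸ le_sup' (fun i => |hP.eigenvalues i|) (mem_erase.mpr ⟨hk, mem_univ k⟩)
  refine ⟨?_, sup'_le _ _ fun ⟨i, j⟩ _ => ?_⟩
  · rw [div_le_iff₀ hn0, hμ]
    refine sup'_le _ _ fun k hk => ?_
    simpa only [Fintype.card_fin, mul_comm] using abs_le_card_mul_of_hasEigenvalue
      (hP.hasEigenvalue_sub_vecMulVec hvec hu hi₀ (ne_of_mem_erase hk)) hS
  by_cases hone : ∃ k ≠ i₀, hP.eigenvalues k = 1
  · obtain ⟨k, hk, hk1⟩ := hone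
    have hstoch : P ∈ rowStochastic ℝ (Fin n) := mem_rowStochastic_iff_sum.mpr ⟨hnonneg, hrow⟩
    calc |P i j - (n : ℝ)⁻¹| ≤ 1 := abs_sub_le_of_nonneg_of_le (hnonneg i j)
          (le_one_of_mem_rowStochastic hstoch) (by positivity) (Nat.cast_inv_le_one n)
      _ = |hP.eigenvalues k| := by rw [hk1, abs_one]
      _ ≤ μ := hμ_ge k hk
  · push Not at hone
    have : Nontrivial (Fin n) := Fin.nontrivial_iff_two_le.mpr hn
    obtain ⟨k, hk⟩ := exists_ne i₀
    rw [← hQ]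
    exact hP.abs_sub_vecMulVec_apply_le hvec hu hi₀ hone hμ_ge
      ((abs_nonneg _).trans (hμ_ge k hk)) i j
end

section
/- Let d ≥ 3 and 2√(d−1) < λ ≤ d. Then (λ + √(λ² − 4(d−1)))/(2(d−1)) > λ/(2(d−1)) and (λ + √(λ² − 4(d−1)))/(2(d−1)) ≤ λ/d; hence the ratio of the non-backtracking mixing rate ψ(λ/(2√(d−1)))/√(d−1) to the simple random walk mixing rate λ/d lies in (d/(2(d−1)), 1]. -/
/-!
Writing `s = √(d-1)`, the value `ψ(λ/(2s))/s` is the larger root `(λ + √(λ² - 4s²))/(2s²)` of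
`(d-1)x² - λx + 1`. The bound by `λ/d` amounts to `d√(λ² - 4(d-1)) ≤ (d-2)λ`, which after squaring
is `λ² ≤ d²`; the strict lower bound holds because the discriminant is positive when `λ > 2s`.
-/

/-- `ψ(x) = x + √(x²−1)` for `x ≥ 1`, and `ψ(x) = 1` for `x ≤ 1`. -/
noncomputable def psi (x : ℝ) : ℝ :=
  if 1 ≤ x then x + Real.sqrt (x ^ 2 - 1) else 1

open Real

theorem psi_div_two_mul {s lam : ℝ} (hs : 0 < s) (h : 2 * s ≤ lam) :
    psi (lam / (2 * s)) = (lam + √(lam ^ 2 - 4 * s ^ 2)) / (2 * s) := by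
  have hx : 1 ≤ lam / (2 * s) := (one_le_div (by positivity)).mpr h
  have hsq : (lam / (2 * s)) ^ 2 - 1 = (lam ^ 2 - 4 * s ^ 2) / (2 * s) ^ 2 := by
    field_simp
    ring
  rw [psi, if_pos hx, hsq, sqrt_div' _ (sq_nonneg _), sqrt_sq (by positivity), ← add_div]

theorem psi_div_two_mul_div {s lam : ℝ} (hs : 0 < s) (h : 2 * s ≤ lam) :
    psi (lam / (2 * s)) / s = (lam + √(lam ^ 2 - 4 * s ^ 2)) / (2 * s ^ 2) := by
  rw [psi_div_two_mul hs h, div_div]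
  ring

theorem add_sqrt_div_le_div {d lam : ℝ} (hd : 2 ≤ d) (hlam : 0 ≤ lam) (hlam_d : lam ≤ d) :
    (lam + √(lam ^ 2 - 4 * (d - 1))) / (2 * (d - 1)) ≤ lam / d := by
  have hd0 : 0 < d := by linarith
  have hd1 : 0 < d - 1 := by linarith
  have hd2 : 0 ≤ d - 2 := by linarith
  have hroot : √(lam ^ 2 - 4 * (d - 1)) ≤ (d - 2) * lam / d := by
    refine sqrt_le_iff.mpr ⟨by positivity, ?_⟩
    rw [div_pow, le_div_iff₀ (by positivity)]
    nlinarith [mul_le_mul hlam_d hlam_d hlam hd0.le]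
  calc (lam + √(lam ^ 2 - 4 * (d - 1))) / (2 * (d - 1))
      ≤ (lam + (d - 2) * lam / d) / (2 * (d - 1)) := by gcongr
    _ = lam / d := by
      field_simp
      ring

/-- For `d ≥ 3` and `2√(d−1) < λ ≤ d`:
    `λ/(2(d−1)) < (λ + √(λ²−4(d−1)))/(2(d−1)) ≤ λ/d`, the non-backtracking mixing
    rate `ψ(λ/(2√(d−1)))/√(d−1)` equals `(λ + √(λ²−4(d−1)))/(2(d−1))`, and hence the
    ratio of the non-backtracking mixing rate to the simple random walk mixing rate
    `λ/d` lies in `(d/(2(d−1)), 1]`. -/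
theorem mixing_rate_ratio (d : ℕ) (hd : 3 ≤ d) (lam : ℝ)
    (h1 : 2 * Real.sqrt ((d : ℝ) - 1) < lam) (h2 : lam ≤ d) :
    lam / (2 * ((d : ℝ) - 1))
        < (lam + Real.sqrt (lam ^ 2 - 4 * ((d : ℝ) - 1))) / (2 * ((d : ℝ) - 1)) ∧
    (lam + Real.sqrt (lam ^ 2 - 4 * ((d : ℝ) - 1))) / (2 * ((d : ℝ) - 1)) ≤ lam / d ∧
    psi (lam / (2 * Real.sqrt ((d : ℝ) - 1))) / Real.sqrt ((d : ℝ) - 1)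
        = (lam + Real.sqrt (lam ^ 2 - 4 * ((d : ℝ) - 1))) / (2 * ((d : ℝ) - 1)) ∧
    (d : ℝ) / (2 * ((d : ℝ) - 1))
        < (psi (lam / (2 * Real.sqrt ((d : ℝ) - 1))) / Real.sqrt ((d : ℝ) - 1))
            / (lam / d) ∧
    (psi (lam / (2 * Real.sqrt ((d : ℝ) - 1))) / Real.sqrt ((d : ℝ) - 1))
        / (lam / d) ≤ 1 := by
  have hd2 : (2 : ℝ) ≤ d := by exact_mod_cast (by omega : 2 ≤ d)
  have hd1 : (0 : ℝ) < d - 1 := by linarith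
  have hs : √((d : ℝ) - 1) ^ 2 = d - 1 := sq_sqrt hd1.le
  have hlam : 0 < lam := lt_of_le_of_lt (by positivity) h1
  have hdisc : 4 * ((d : ℝ) - 1) < lam ^ 2 :=
    calc 4 * ((d : ℝ) - 1) = (2 * √((d : ℝ) - 1)) ^ 2 := by rw [mul_pow, hs]; norm_num
      _ < lam ^ 2 := by gcongr
  have hnb : psi (lam / (2 * √((d : ℝ) - 1))) / √((d : ℝ) - 1)
      = (lam + √(lam ^ 2 - 4 * ((d : ℝ) - 1))) / (2 * ((d : ℝ) - 1)) := by
    rw [psi_div_two_mul_div (sqrt_pos.mpr hd1) h1.le, hs]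
  have hlower : lam / (2 * ((d : ℝ) - 1))
      < (lam + √(lam ^ 2 - 4 * ((d : ℝ) - 1))) / (2 * ((d : ℝ) - 1)) :=
    div_lt_div_of_pos_right (lt_add_of_pos_right _ (sqrt_pos.mpr (sub_pos.mpr hdisc)))
      (by positivity)
  have hupper := add_sqrt_div_le_div hd2 hlam.le h2
  have hrate : 0 < lam / d := by positivity
  refine ⟨hlower, hupper, hnb, ?_, ?_⟩ <;> rw [hnb]
  · calc (d : ℝ) / (2 * ((d : ℝ) - 1)) = lam / (2 * ((d : ℝ) - 1)) / (lam / d) := by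
          field_simp
      _ < _ := div_lt_div_of_pos_right hlower hrate
  · exact (div_le_one hrate).mpr hupper
end
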